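/- Let 0 < ρ̃₂ < ρ̃₁. The differentiation operator D : F²_{ρ̃₁}(ℝ) → F²_{ρ̃₂}(ℝ), sending Σ_{k≥0} a_k x^k to Σ_{k≥1} k a_k x^{k−1}, is a compact operator. -/

import Mathlib

/-!
If a bounded operator `T` sends a Hilbert basis `b` to a pairwise orthogonal family, then
`‖T x‖² = ∑ ‖⟪b i, x⟫‖² ‖T (b i)‖²`. Hence, when `‖T (b i)‖ → 0`, the compositions of `T` with
the orthogonal projections onto the spans of finitely many `b i` are finite-rank operators
converging to `T` in operator norm, and `T` is compact. Differentiation sends `e₁ (k + 1)` to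
`√((k + 1) ρ₂ ^ k / ρ₁ ^ (k + 1)) • e₂ k`, and these weights tend to zero because `ρ₂ / ρ₁ < 1`.
-/

open Filter Topology
open scoped InnerProductSpace

namespace HilbertBasis

variable {ι 𝕜 E F : Type*} [RCLike 𝕜]
  [NormedAddCommGroup E] [InnerProductSpace 𝕜 E]
  [NormedAddCommGroup F] [InnerProductSpace 𝕜 F]
  (b : HilbertBasis ι 𝕜 E) {T : E →L[𝕜] F}

theorem hasSum_norm_sq_apply_of_pairwise_inner_eq_zero
    (hT : Pairwise fun i j => ⟪T (b i), T (b j)⟫_𝕜 = 0) (x : E) :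
    HasSum (fun i => ‖b.repr x i‖ ^ 2 * ‖T (b i)‖ ^ 2) (‖T x‖ ^ 2) := by
  classical
  have hTx : HasSum (fun i => b.repr x i • T (b i)) (T x) := by
    simpa using T.hasSum (b.hasSum_repr x)
  have hcoef : ∀ j, ⟪T (b j), T x⟫_𝕜 = b.repr x j * (‖T (b j)‖ : 𝕜) ^ 2 := by
    intro j
    refine ((innerSL 𝕜 (T (b j))).hasSum hTx).unique ?_
    convert hasSum_ite_eq j (b.repr x j * (‖T (b j)‖ : 𝕜) ^ 2) using 1
    funext i
    split_ifs with h
    · subst h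
      simp [inner_self_eq_norm_sq_to_K]
    · simp [hT (Ne.symm h)]
  have hself := (innerSL 𝕜 (T x)).hasSum hTx
  rw [← RCLike.hasSum_ofReal (𝕜 := 𝕜)]
  convert hself using 1
  · funext i
    simp only [innerSL_apply_apply, inner_smul_right]
    rw [← inner_conj_symm, hcoef, map_mul, ← mul_assoc, RCLike.mul_conj]
    simp
  · simp [inner_self_eq_norm_sq_to_K]

theorem hasSum_norm_sq_repr (x : E) : HasSum (fun i => ‖b.repr x i‖ ^ 2) (‖x‖ ^ 2) := by
  simpa using lp.hasSum_norm (p := 2) (by norm_num) (b.repr x)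

theorem norm_apply_le_of_inner_eq_zero (hT : Pairwise fun i j => ⟪T (b i), T (b j)⟫_𝕜 = 0)
    {s : Set ι} {ε : ℝ} (hε : 0 ≤ ε) (hTb : ∀ i ∉ s, ‖T (b i)‖ ≤ ε) {x : E}
    (hx : ∀ i ∈ s, ⟪b i, x⟫_𝕜 = 0) : ‖T x‖ ≤ ε * ‖x‖ := by
  have hterm : ∀ i, ‖b.repr x i‖ ^ 2 * ‖T (b i)‖ ^ 2 ≤ ε ^ 2 * ‖b.repr x i‖ ^ 2 := by
    intro i
    by_cases hi : i ∈ s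
    · simp [b.repr_apply_apply, hx i hi]
    · rw [mul_comm]
      gcongr
      exact hTb i hi
  have hsq : ‖T x‖ ^ 2 ≤ (ε * ‖x‖) ^ 2 := by
    rw [mul_pow]
    exact hasSum_le hterm (b.hasSum_norm_sq_apply_of_pairwise_inner_eq_zero hT x)
      ((b.hasSum_norm_sq_repr x).mul_left _)
  exact pow_le_pow_iff_left₀ (norm_nonneg _) (by positivity) two_ne_zero |>.mp hsq

theorem norm_sub_comp_starProjection_le (hT : Pairwise fun i j => ⟪T (b i), T (b j)⟫_𝕜 = 0)
    (s : Set ι) [(Submodule.span 𝕜 (b '' s)).HasOrthogonalProjection] {ε : ℝ} (hε : 0 ≤ ε)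
    (hTb : ∀ i ∉ s, ‖T (b i)‖ ≤ ε) :
    ‖T - T ∘L (Submodule.span 𝕜 (b '' s)).starProjection‖ ≤ ε := by
  set K := Submodule.span 𝕜 (b '' s)
  refine ContinuousLinearMap.opNorm_le_bound _ hε fun x => ?_
  have hperp : ∀ i ∈ s, ⟪b i, x - K.starProjection x⟫_𝕜 = 0 := fun i hi =>
    K.inner_right_of_mem_orthogonal (Submodule.subset_span ⟨i, hi, rfl⟩)
      (K.sub_starProjection_mem_orthogonal x)
  rw [sub_apply, ContinuousLinearMap.comp_apply, ← map_sub]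
  calc ‖T (x - K.starProjection x)‖ ≤ ε * ‖x - K.starProjection x‖ :=
        b.norm_apply_le_of_inner_eq_zero hT hε hTb hperp
    _ ≤ ε * ‖x‖ := by
        gcongr
        rw [← K.starProjection_orthogonal_val]
        exact Kᗮ.norm_starProjection_apply_le x

theorem isCompactOperator_of_pairwise_inner_eq_zero [CompleteSpace F]
    (hT : Pairwise fun i j => ⟪T (b i), T (b j)⟫_𝕜 = 0)
    (hlim : Tendsto (fun i => ‖T (b i)‖) cofinite (𝓝 0)) : IsCompactOperator T := by
  have (s : Finset ι) : FiniteDimensional 𝕜 (Submodule.span 𝕜 (b '' s)) :=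
    FiniteDimensional.span_of_finite 𝕜 (s.finite_toSet.image b)
  have hcompact (s : Finset ι) :
      IsCompactOperator (T ∘L (Submodule.span 𝕜 (b '' s)).starProjection) :=
    (isCompactOperator_of_locallyCompactSpace_dom
      (Submodule.span 𝕜 (b '' s)).orthogonalProjectionOnto).clm_comp (T ∘L Submodule.subtypeL _)
  refine isCompactOperator_of_tendsto (l := atTop) ?_ (Eventually.of_forall hcompact)
  rw [tendsto_iff_norm_sub_tendsto_zero, NormedAddGroup.tendsto_nhds_zero]
  intro ε hε
  have hfin : {i | ¬‖T (b i)‖ < ε / 2}.Finite :=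
    eventually_cofinite.mp (hlim.eventually (gt_mem_nhds (half_pos hε)))
  filter_upwards [eventually_ge_atTop hfin.toFinset] with s hs
  rw [norm_norm, norm_sub_rev]
  refine (b.norm_sub_comp_starProjection_le hT s (half_pos hε).le fun i hi => ?_).trans_lt
    (half_lt_self hε)
  by_contra h
  exact hi (hs (hfin.mem_toFinset.mpr fun h' => h h'.le))

end HilbertBasis

theorem tendsto_succ_mul_pow_div_pow_succ {a r : ℝ} (ha : 0 ≤ a) (har : a < r) :
    Tendsto (fun k : ℕ => (k + 1) * a ^ k / r ^ (k + 1)) atTop (𝓝 0) := by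
  have hr : 0 < r := ha.trans_lt har
  have hq : a / r < 1 := (div_lt_one hr).2 har
  have hlim := ((tendsto_self_mul_const_pow_of_lt_one (by positivity) hq).add
    (tendsto_pow_atTop_nhds_zero_of_lt_one (by positivity) hq)).div_const r
  rw [zero_add, zero_div] at hlim
  refine hlim.congr fun k => ?_
  rw [div_pow, pow_succ]
  field_simp

theorem stmt_12_general (ρ₁ ρ₂ : ℝ) (h₂ : 0 < ρ₂) (h₁₂ : ρ₂ < ρ₁)
    {H₁ H₂ : Type*}
    [NormedAddCommGroup H₁] [InnerProductSpace ℝ H₁]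
    [NormedAddCommGroup H₂] [InnerProductSpace ℝ H₂] [CompleteSpace H₂]
    -- orthonormal monomial bases of `F²_ρ₁(ℝ)` and `F²_ρ₂(ℝ)`
    (e₁ : HilbertBasis ℕ ℝ H₁) (e₂ : HilbertBasis ℕ ℝ H₂)
    -- the differentiation operator, expressed in the bases
    (D : H₁ →L[ℝ] H₂) (hD0 : D (e₁ 0) = 0)
    (hD : ∀ k : ℕ, D (e₁ (k + 1))
      = Real.sqrt ((k + 1) * ρ₂ ^ k / ρ₁ ^ (k + 1)) • e₂ k) :
    IsCompactOperator D := by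
  refine e₁.isCompactOperator_of_pairwise_inner_eq_zero ?_ ?_
  · rintro (_ | i) (_ | j) hij
    · exact absurd rfl hij
    · simp [hD0]
    · simp [hD0]
    · simp [hD, real_inner_smul_left, real_inner_smul_right,
        e₂.orthonormal.2 (show i ≠ j by omega)]
  · rw [Nat.cofinite_eq_atTop, ← tendsto_add_atTop_iff_nat 1]
    simpa [hD, norm_smul, e₂.orthonormal.1, Real.norm_of_nonneg (Real.sqrt_nonneg _)] using
      (tendsto_succ_mul_pow_div_pow_succ h₂.le h₁₂).sqrt

/-- Compactness of differentiation `D : F²_ρ₁(ℝ) → F²_ρ₂(ℝ)`,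
`Σ a_k x^k ↦ Σ k a_k x^{k-1}`, for `0 < ρ₂ < ρ₁`. With respect to the
orthonormal monomial bases `e k = x^k/√(ρ^k k!)`, `D` is the weighted shift
`e₁ 0 ↦ 0`, `e₁ (k+1) ↦ √((k+1) ρ₂^k / ρ₁^(k+1)) • e₂ k`; such an operator is
compact. -/
theorem stmt_12 (ρ₁ ρ₂ : ℝ) (h₂ : 0 < ρ₂) (h₁₂ : ρ₂ < ρ₁)
    {H₁ H₂ : Type*}
    [NormedAddCommGroup H₁] [InnerProductSpace ℝ H₁] [CompleteSpace H₁]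
    [NormedAddCommGroup H₂] [InnerProductSpace ℝ H₂] [CompleteSpace H₂]
    -- orthonormal monomial bases of `F²_ρ₁(ℝ)` and `F²_ρ₂(ℝ)`
    (e₁ : HilbertBasis ℕ ℝ H₁) (e₂ : HilbertBasis ℕ ℝ H₂)
    -- the differentiation operator, expressed in the bases
    (D : H₁ →L[ℝ] H₂) (hD0 : D (e₁ 0) = 0)
    (hD : ∀ k : ℕ, D (e₁ (k + 1))
      = Real.sqrt ((k + 1) * ρ₂ ^ k / ρ₁ ^ (k + 1)) • e₂ k) :
    IsCompactOperator D :=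
  stmt_12_general ρ₁ ρ₂ h₂ h₁₂ e₁ e₂ D hD0 hD
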